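/- There exists an equivalence-equipped argumentation framework and a subset S of its arguments such that S is simple-admissible but not wide-admissible. Concretely, take A = {1, 2, 3, 4, 5}, att = {(1,2), (2,3), (4,5)}, and ≈ the smallest equivalence relation with 3 ≈ 5; then S = {1, 3} is simple-admissible but not wide-admissible. -/

import Mathlib

namespace EEAF

variable {A : Type*}

/-- Equivalence closure of a set of arguments. -/
def cl (equiv : A → A → Prop) (S : Set A) : Set A := {u | ∃ v ∈ S, equiv u v}

/-- `S` is simple-conflict-free: no attacks among members of `S`. -/
def SimpleCF (att : A → A → Prop) (S : Set A) : Prop := ∀ u ∈ S, ∀ v ∈ S, ¬ att u v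

/-- `S` is wide-conflict-free: its equivalence closure is simple-conflict-free. -/
def WideCF (att equiv : A → A → Prop) (S : Set A) : Prop := SimpleCF att (cl equiv S)

/-- `S` simple-defends `u`. -/
def SimpleDef (att : A → A → Prop) (S : Set A) (u : A) : Prop :=
  ∀ v, att v u → ∃ w ∈ S, att w v

/-- `S` wide-defends `u`: it simple-defends every member of `cl {u}`. -/
def WideDef (att equiv : A → A → Prop) (S : Set A) (u : A) : Prop :=
  ∀ x ∈ cl equiv ({u} : Set A), SimpleDef att S x

/-- `S` is simple-admissible. -/
def SimpleAdm (att : A → A → Prop) (S : Set A) : Prop :=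
  SimpleCF att S ∧ ∀ u ∈ S, SimpleDef att S u

/-- `S` is wide-admissible. -/
def WideAdm (att equiv : A → A → Prop) (S : Set A) : Prop :=
  WideCF att equiv S ∧ ∀ u ∈ S, WideDef att equiv S u

/-- `S` is closed under equivalence. -/
def ClosedEquiv (equiv : A → A → Prop) (S : Set A) : Prop := S = cl equiv S

/-- The five arguments 1,…,5. -/
inductive Arg : Type
  | a1 | a2 | a3 | a4 | a5
deriving DecidableEq

instance instFintypeArg : Fintype Arg :=
  ⟨{Arg.a1, Arg.a2, Arg.a3, Arg.a4, Arg.a5}, fun x => by cases x <;> simp⟩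

/-- The attack relation: 1 attacks 2, 2 attacks 3, 4 attacks 5. -/
def attEx : Arg → Arg → Prop := fun u v =>
  (u = Arg.a1 ∧ v = Arg.a2) ∨ (u = Arg.a2 ∧ v = Arg.a3) ∨ (u = Arg.a4 ∧ v = Arg.a5)

/-- The smallest equivalence relation with 3 ≈ 5. -/
def equivEx : Arg → Arg → Prop := Relation.EqvGen (fun u v => u = Arg.a3 ∧ v = Arg.a5)

section General

variable {A : Type*} {att equiv : A → A → Prop} {S : Set A}

theorem mem_cl_singleton {u x : A} : x ∈ cl equiv {u} ↔ equiv x u := by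
  simp [cl]

theorem simpleDef_of_forall_not_att {u : A} (h : ∀ v, ¬ att v u) : SimpleDef att S u :=
  fun v hv => (h v hv).elim

theorem not_wideAdm_of_undefended {u x v : A} (hu : u ∈ S) (hxu : equiv x u) (hvx : att v x)
    (hS : ∀ w ∈ S, ¬ att w v) : ¬ WideAdm att equiv S := by
  rintro ⟨-, hdef⟩
  obtain ⟨w, hw, hwv⟩ := hdef u hu x (mem_cl_singleton.2 hxu) v hvx
  exact hS w hw hwv

end General

open Arg

theorem attEx_iff {u v : Arg} :
    attEx u v ↔ (u, v) = (a1, a2) ∨ (u, v) = (a2, a3) ∨ (u, v) = (a4, a5) := by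
  simp [attEx]

theorem equivEx_a5_a3 : equivEx a5 a3 :=
  .symm _ _ (.rel _ _ ⟨rfl, rfl⟩)

theorem not_attEx_a4 (w : Arg) : ¬ attEx w a4 := by
  simp [attEx_iff]

theorem simpleAdm_a1_a3 : SimpleAdm attEx ({a1, a3} : Set Arg) := by
  refine ⟨by simp [SimpleCF, attEx_iff], ?_⟩
  rintro u (rfl | rfl)
  · exact simpleDef_of_forall_not_att fun v => by simp [attEx_iff]
  · intro v hv
    obtain rfl : v = a2 := by simpa [attEx_iff] using hv
    exact ⟨a1, by simp, by simp [attEx_iff]⟩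

/-- There is an equivalence-equipped argumentation framework with a subset that is
simple-admissible but not wide-admissible: here S = {1, 3}. -/
theorem simpleAdm_not_wideAdm_example :
    Equivalence equivEx ∧
    SimpleAdm attEx ({Arg.a1, Arg.a3} : Set Arg) ∧
    ¬ WideAdm attEx equivEx ({Arg.a1, Arg.a3} : Set Arg) := by
  refine ⟨Relation.EqvGen.is_equivalence _, simpleAdm_a1_a3, ?_⟩
  -- 4 attacks 5 ≈ 3, and nothing attacks 4.
  exact not_wideAdm_of_undefended (u := a3) (by simp) equivEx_a5_a3 (by simp [attEx_iff])
    fun w _ => not_attEx_a4 w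

end EEAF
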